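/- arXiv:1304.5809 — 2 statements merged into one kernel-verified Lean document; each statement's English description precedes it below -/
import Mathlib

section
/- Let f₁, f₂ be Laurent polynomials in two variables that are both η-homogeneous (of degrees ν₁, ν₂ respectively) for the same primitive vector η ∈ ℤ² with ν₁, ν₂ not both zero. Then the toric Jacobian J^T = x₁x₂·det(∂f_i/∂x_j) lies in the ideal generated by f₁ and f₂ in the Laurent polynomial ring. -/
/-!
Cramer's rule: if `M = (x_j ∂f_i/∂x_j)` then the weighted Euler identities say `M η = (ν₁ f₁, ν₂ f₂)`,
so `adj M · M η = det M · η` has both entries in `(f₁, f₂)`. Since `η` is primitive, some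
integer combination of its entries is `1`, and hence `det M` itself lies in `(f₁, f₂)`.
-/

open Finsupp

abbrev LaurentPoly2 (K : Type*) [CommRing K] := AddMonoidAlgebra K (Fin 2 → ℤ)

/-- The operator `x_i ∂/∂x_i` on Laurent polynomials. -/
noncomputable def xd {K : Type*} [CommRing K] (i : Fin 2)
    (f : LaurentPoly2 K) : LaurentPoly2 K :=
  f.coeff.sum fun a c => AddMonoidAlgebra.ofCoeff (Finsupp.single a ((a i : ℤ) • c))

/-- The toric Jacobian `x₁x₂·det(∂f_i/∂x_j) = det(x_j ∂f_i/∂x_j)` of two bivariate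
Laurent polynomials. -/
noncomputable def toricJacobian {K : Type*} [CommRing K] (f₁ f₂ : LaurentPoly2 K) :
    LaurentPoly2 K :=
  xd 0 f₁ * xd 1 f₂ - xd 1 f₁ * xd 0 f₂

theorem mul_sub_mul_mem_span_pair_of_isCoprime {R : Type*} [CommRing R]
    {e₀ e₁ p₀ p₁ q₀ q₁ f g c d : R}
    (he : IsCoprime e₀ e₁) (hp : e₀ * p₀ + e₁ * p₁ = c * f) (hq : e₀ * q₀ + e₁ * q₁ = d * g) :
    p₀ * q₁ - p₁ * q₀ ∈ Ideal.span {f, g} := by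
  obtain ⟨u, v, huv⟩ := he
  rw [Ideal.mem_span_pair]
  exact ⟨c * (u * q₁ - v * q₀), d * (v * p₀ - u * p₁), by
    linear_combination (v * q₀ - u * q₁) * hp + (u * p₁ - v * p₀) * hq
      + (p₀ * q₁ - p₁ * q₀) * huv⟩

section Euler

variable {K : Type*} [CommRing K]

theorem xd_coeff (i : Fin 2) (f : LaurentPoly2 K) (b : Fin 2 → ℤ) :
    (xd i f).coeff b = b i • f.coeff b := by
  classical
  rw [xd, ← AddMonoidAlgebra.ofCoeff_finsuppSum, AddMonoidAlgebra.coeff_ofCoeff,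
    Finsupp.sum_apply, Finsupp.sum]
  simp only [Finsupp.single_apply]
  rw [Finset.sum_ite_eq' f.coeff.support b (fun a => a i • f.coeff a)]
  split_ifs with hb
  · rfl
  · rw [Finsupp.notMem_support_iff.mp hb, smul_zero]

theorem weighted_euler (f : LaurentPoly2 K) (η : Fin 2 → ℤ) (ν : ℤ)
    (hhom : ∀ a ∈ f.coeff.support, (∑ i, η i * a i) = ν) :
    (η 0 : LaurentPoly2 K) * xd 0 f + (η 1 : LaurentPoly2 K) * xd 1 f =
      (ν : LaurentPoly2 K) * f := by
  simp only [← zsmul_eq_mul]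
  ext b
  change η 0 • (xd 0 f).coeff b + η 1 • (xd 1 f).coeff b = ν • f.coeff b
  rw [xd_coeff, xd_coeff, smul_smul, smul_smul, ← add_smul]
  by_cases hb : b ∈ f.coeff.support
  · rw [← hhom b hb, Fin.sum_univ_two]
  · rw [Finsupp.notMem_support_iff.mp hb, smul_zero, smul_zero]

end Euler

theorem toricJacobian_mem_ideal_of_homogeneous_general {K : Type*} [Field K]
    (f₁ f₂ : LaurentPoly2 K) (η : Fin 2 → ℤ) (ν₁ ν₂ : ℤ)
    (hprim : IsCoprime (η 0) (η 1))
    (hhom₁ : ∀ a ∈ f₁.coeff.support, (∑ i, η i * a i) = ν₁)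
    (hhom₂ : ∀ a ∈ f₂.coeff.support, (∑ i, η i * a i) = ν₂) :
    toricJacobian f₁ f₂ ∈ Ideal.span ({f₁, f₂} : Set (LaurentPoly2 K)) :=
  mul_sub_mul_mem_span_pair_of_isCoprime hprim.intCast
    (weighted_euler f₁ η ν₁ hhom₁) (weighted_euler f₂ η ν₂ hhom₂)

/-- If `f₁, f₂` are bivariate Laurent polynomials which are `η`-homogeneous of degrees
`ν₁, ν₂` for the same primitive vector `η ∈ ℤ²`, with `ν₁, ν₂` not both zero, then the
toric Jacobian lies in the ideal generated by `f₁` and `f₂`. -/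
theorem toricJacobian_mem_ideal_of_homogeneous {K : Type*} [Field K]
    (f₁ f₂ : LaurentPoly2 K) (η : Fin 2 → ℤ) (ν₁ ν₂ : ℤ)
    (hprim : IsCoprime (η 0) (η 1))
    (hν : ν₁ ≠ 0 ∨ ν₂ ≠ 0)
    (hhom₁ : ∀ a ∈ f₁.coeff.support, (∑ i, η i * a i) = ν₁)
    (hhom₂ : ∀ a ∈ f₂.coeff.support, (∑ i, η i * a i) = ν₂) :
    toricJacobian f₁ f₂ ∈ Ideal.span ({f₁, f₂} : Set (LaurentPoly2 K)) :=
  toricJacobian_mem_ideal_of_homogeneous_general f₁ f₂ η ν₁ ν₂ hprim hhom₁ hhom₂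
end

section
/- Multiplicativity of the univariate resultant: for polynomials f, g, h over a commutative ring, Res(f, g·h) = Res(f, g)·Res(f, h). -/
open Polynomial

/-- The Sylvester matrix of `f`, `g`, regarded as having degrees `m` and `n`. -/
noncomputable def sylvester {R : Type*} [CommRing R] (m n : ℕ) (f g : R[X]) :
    Matrix (Fin (n + m)) (Fin (n + m)) R := fun i j =>
  if (i : ℕ) < n then
    (if (i : ℕ) ≤ (j : ℕ) then f.coeff ((j : ℕ) - (i : ℕ)) else 0)
  else
    (if (i : ℕ) - n ≤ (j : ℕ) then g.coeff ((j : ℕ) - ((i : ℕ) - n)) else 0)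

/-- The resultant of `f` and `g` of respective degrees `m`, `n`. -/
noncomputable def res {R : Type*} [CommRing R] (m n : ℕ) (f g : R[X]) : R :=
  (sylvester m n f g).det

section Sylvester

variable {R : Type*} [CommRing R] {m n : ℕ} {f g : R[X]}

-- Mathlib's Sylvester matrix cuts the coefficients off at `j + m` (resp. `j + n`); the degree
-- bounds make that cut-off invisible.
theorem transpose_sylvester (hf : f.natDegree ≤ m) (hg : g.natDegree ≤ n) :
    (_root_.sylvester m n f g).transpose = Polynomial.sylvester g f n m := by
  ext i j
  induction j using Fin.addCases with
  | left j =>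
    simp only [Matrix.transpose_apply, _root_.sylvester, Polynomial.sylvester, Matrix.of_apply,
      Fin.addCases_left, Fin.val_castAdd, j.isLt, if_true, Set.mem_Icc]
    split_ifs <;> first
      | rfl | omega | exact coeff_eq_zero_of_natDegree_lt (by omega)
  | right j =>
    simp only [Matrix.transpose_apply, _root_.sylvester, Polynomial.sylvester, Matrix.of_apply,
      Fin.addCases_right, Fin.val_natAdd, Set.mem_Icc, Nat.add_sub_cancel_left,
      show ¬ n + (j : ℕ) < n by omega, if_false]
    split_ifs <;> first
      | rfl | omega | exact coeff_eq_zero_of_natDegree_lt (by omega)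

theorem res_eq_resultant (hf : f.natDegree ≤ m) (hg : g.natDegree ≤ n) :
    res m n f g = resultant g f n m := by
  rw [res, ← Matrix.det_transpose, transpose_sylvester hf hg, resultant]

end Sylvester

/-- Multiplicativity of the univariate resultant in its second argument:
`Res(f, g·h) = Res(f, g) · Res(f, h)`. -/
theorem res_mul_right {R : Type*} [CommRing R] (m n₁ n₂ : ℕ) (f g h : R[X])
    (hf : f.natDegree = m) (hg : g.natDegree = n₁) (hh : h.natDegree = n₂) :
    res m (n₁ + n₂) f (g * h) = res m n₁ f g * res m n₂ f h := by
  have hgh : (g * h).natDegree ≤ n₁ + n₂ := hg ▸ hh ▸ natDegree_mul_le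
  rw [res_eq_resultant hf.le hgh, res_eq_resultant hf.le hg.le, res_eq_resultant hf.le hh.le,
    ← hg, ← hh, resultant_mul_left g h f m hf.le]
end
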